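/- Let τ := diag(1,−1,1) and σ := (1/2)·[[1,1,2],[1,1,−2],[1,−1,0]], and let K be the subgroup of GL_3(ℚ) generated by the product τ·σ, acting on ℂ[x_0,x_1,x_2] by linear substitution of variables. Then K has order 3, and the invariant ring ℂ[x_0,x_1,x_2]^K equals the ℂ-subalgebra generated by f_1 := x_0 + x_2, f_2 := x_0² + x_1² + 2x_2², f_3 := x_0³ + 3x_0x_2² + 3x_1²x_2 + x_2³, and h := x_0²x_1 − 4x_0x_1x_2 − x_1³ + 4x_1x_2². -/

import Mathlib

open MvPolynomial

/-- The matrix `τ = diag(1,−1,1)`. -/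
def tauQ : Matrix (Fin 3) (Fin 3) ℚ := !![1, 0, 0; 0, -1, 0; 0, 0, 1]

/-- The matrix `σ = (1/2)·[[1,1,2],[1,1,−2],[1,−1,0]]`. -/
def sigmaQ : Matrix (Fin 3) (Fin 3) ℚ := (1 / 2 : ℚ) • !![1, 1, 2; 1, 1, -2; 1, -1, 0]

/-- The subgroup `K ≤ GL_3(ℚ)` generated by the product `τ·σ`. -/
def grpK : Subgroup (Matrix (Fin 3) (Fin 3) ℚ)ˣ :=
  Subgroup.closure
    {u : (Matrix (Fin 3) (Fin 3) ℚ)ˣ | (u : Matrix (Fin 3) (Fin 3) ℚ) = tauQ * sigmaQ}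

/-- Substitution of variables `x_s ↦ Σ_t A_{st} x_t` as an algebra endomorphism. -/
noncomputable def substAlg {ι : Type*} [Fintype ι] {k : Type*} [CommSemiring k]
    (A : Matrix ι ι k) : MvPolynomial ι k →ₐ[k] MvPolynomial ι k :=
  aeval fun s => ∑ t, A s t • X t

noncomputable def f1 : MvPolynomial (Fin 3) ℂ := X 0 + X 2
noncomputable def f2 : MvPolynomial (Fin 3) ℂ := X 0 ^ 2 + X 1 ^ 2 + 2 * X 2 ^ 2
noncomputable def f3 : MvPolynomial (Fin 3) ℂ :=
  X 0 ^ 3 + 3 * X 0 * X 2 ^ 2 + 3 * X 1 ^ 2 * X 2 + X 2 ^ 3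
noncomputable def hPoly : MvPolynomial (Fin 3) ℂ :=
  X 0 ^ 2 * X 1 - 4 * X 0 * X 1 * X 2 - X 1 ^ 3 + 4 * X 1 * X 2 ^ 2

/-!
The matrix `g = τσ` satisfies `g³ = 1 ≠ g`, so `K = ⟨g⟩` has order 3 and a polynomial is
`K`-invariant iff it is fixed by `g`. Over `ℂ`, `g Q = Q diag(1, ω, ω²)` for a primitive cube root
of unity `ω` and an invertible `Q` whose columns are eigenvectors of `g`. Substituting by `Q`
carries `g`-invariants to invariants of the diagonal substitution, which scales `x₀^a x₁^b x₂^c`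
by `ω^(b + 2c)`; these are generated by `x₀, x₁x₂, x₁³, x₂³`, since `3 ∣ b + 2c` forces
`b ≡ c (mod 3)`. Substituting back by `Q⁻¹` turns these generators into polynomials in
`f₁, f₂, f₃, h`. Conversely `f₁, f₂, f₃, h` are `g`-invariant, which is checked by evaluating at
the points of `ℂ³`.
-/

open Matrix

section Substitution

variable {ι k : Type*} [Fintype ι] [CommSemiring k]

theorem substAlg_mul (A B : Matrix ι ι k) :
    substAlg (A * B) = (substAlg B).comp (substAlg A) := by
  refine algHom_ext fun s => ?_
  simp only [AlgHom.comp_apply, substAlg, aeval_X, map_sum, map_smul, Matrix.mul_apply,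
    Finset.sum_smul, smul_smul, Finset.smul_sum]
  rw [Finset.sum_comm]

theorem substAlg_substAlg (A B : Matrix ι ι k) (p : MvPolynomial ι k) :
    substAlg B (substAlg A p) = substAlg (A * B) p := by
  rw [substAlg_mul, AlgHom.comp_apply]

theorem substAlg_one [DecidableEq ι] : substAlg (1 : Matrix ι ι k) = AlgHom.id k _ :=
  algHom_ext fun s => by simp [substAlg, one_apply]

theorem eval_substAlg (A : Matrix ι ι k) (x : ι → k) (p : MvPolynomial ι k) :
    eval x (substAlg A p) = eval (A *ᵥ x) p := by
  change aeval x (substAlg A p) = aeval (A *ᵥ x) p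
  rw [substAlg, comp_aeval_apply]
  congr 2
  ext s
  simp [mulVec, dotProduct]

theorem equalizer_substAlg_le_map [DecidableEq ι] {A D P Q : Matrix ι ι k} (hQP : Q * P = 1)
    (hAQ : A * Q = Q * D) :
    AlgHom.equalizer (substAlg A) (AlgHom.id k (MvPolynomial ι k)) ≤
      (AlgHom.equalizer (substAlg D) (AlgHom.id k _)).map (substAlg P) := by
  intro p (hp : substAlg A p = p)
  refine ⟨substAlg Q p, ?_, ?_⟩
  · show substAlg D (substAlg Q p) = substAlg Q p
    rw [substAlg_substAlg, ← hAQ, ← substAlg_substAlg, hp]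
  · show substAlg P (substAlg Q p) = p
    rw [substAlg_substAlg, hQP, substAlg_one, AlgHom.id_apply]

variable [DecidableEq ι] {R : Type*} [CommSemiring R]

def substStabilizer (f : R →+* k) (p : MvPolynomial ι k) : Subgroup (Matrix ι ι R)ˣ where
  carrier := {u | substAlg ((u : Matrix ι ι R).map f) p = p}
  mul_mem' {u v} (hu : substAlg _ p = p) (hv : substAlg _ p = p) := by
    show substAlg _ p = p
    rw [Units.val_mul, Matrix.map_mul, substAlg_mul, AlgHom.comp_apply, hu, hv]
  one_mem' := by
    show substAlg _ p = p
    rw [Units.val_one, Matrix.map_one f f.map_zero f.map_one, substAlg_one, AlgHom.id_apply]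
  inv_mem' {u} (hu : substAlg _ p = p) := by
    show substAlg _ p = p
    conv_lhs => rw [← hu, substAlg_substAlg, ← Matrix.map_mul, ← Units.val_mul, mul_inv_cancel,
      Units.val_one, Matrix.map_one f f.map_zero f.map_one, substAlg_one, AlgHom.id_apply]

theorem iInf_equalizer_substAlg_closure (f : R →+* k) (S : Set (Matrix ι ι R)ˣ) :
    ⨅ u ∈ Subgroup.closure S,
        AlgHom.equalizer (substAlg ((u : Matrix ι ι R).map f)) (AlgHom.id k (MvPolynomial ι k)) =
      ⨅ u ∈ S, AlgHom.equalizer (substAlg ((u : Matrix ι ι R).map f)) (AlgHom.id k _) := by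
  refine le_antisymm (le_iInf₂ fun u hu => iInf₂_le u (Subgroup.subset_closure hu)) ?_
  refine le_iInf₂ fun u hu p hp => ?_
  have hS : S ⊆ substStabilizer f p := fun v hv => SetLike.le_def.mp (iInf₂_le v hv) hp
  exact (Subgroup.closure_le _).2 hS hu

end Substitution

theorem mem_of_forall_monomial_one_mem {σ k : Type*} [CommSemiring k]
    {A : Subalgebra k (MvPolynomial σ k)} {p : MvPolynomial σ k}
    (h : ∀ m ∈ p.support, monomial m (1 : k) ∈ A) : p ∈ A := by
  rw [p.as_sum]
  refine Subalgebra.sum_mem _ fun m hm => ?_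
  rw [← mul_one (coeff m p), ← smul_eq_mul, ← smul_monomial]
  exact A.smul_mem (h m hm) _

section Diagonal

variable {ι k : Type*} [Fintype ι] [DecidableEq ι]

theorem substAlg_diagonal_monomial [CommSemiring k] (d : ι → k) (m : ι →₀ ℕ) (c : k) :
    substAlg (diagonal d) (monomial m c) = monomial m ((∏ i, d i ^ m i) * c) := by
  have hX : ∀ s, (∑ t, diagonal d s t • X t : MvPolynomial ι k) = C (d s) * X s := by
    simp [diagonal_apply, smul_eq_C_mul]
  rw [substAlg, aeval_monomial, monomial_eq, Finsupp.prod_fintype _ _ (by simp),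
    Finsupp.prod_fintype _ _ (by simp)]
  simp only [hX, mul_pow, Finset.prod_mul_distrib, map_prod, map_pow, C_mul, algebraMap_eq]
  ring

theorem coeff_substAlg_diagonal [CommSemiring k] (d : ι → k) (p : MvPolynomial ι k)
    (m : ι →₀ ℕ) :
    coeff m (substAlg (diagonal d) p) = (∏ i, d i ^ m i) * coeff m p := by
  induction p using induction_on' with
  | monomial n c =>
    rw [substAlg_diagonal_monomial, coeff_monomial, coeff_monomial]
    split_ifs with h
    · rw [h]
    · rw [mul_zero]
  | add p q hp hq => rw [map_add, coeff_add, coeff_add, hp, hq, mul_add]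

theorem prod_pow_eq_one_of_mem_support [CommRing k] [IsDomain k] {d : ι → k}
    {p : MvPolynomial ι k} (hp : substAlg (diagonal d) p = p) {m : ι →₀ ℕ}
    (hm : m ∈ p.support) : ∏ i, d i ^ m i = 1 :=
  mul_right_cancel₀ (mem_support_iff.mp hm) (by rw [one_mul, ← coeff_substAlg_diagonal, hp])

end Diagonal

theorem monomial_one_mem_adjoin {k : Type*} [CommSemiring k] {m : Fin 3 →₀ ℕ}
    (hm : 3 ∣ m 1 + 2 * m 2) :
    monomial m (1 : k) ∈ Algebra.adjoin k {X 0, X 1 * X 2, X 1 ^ 3, X 2 ^ 3} := by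
  obtain ⟨a, b, r, hr1, hr2⟩ : ∃ a b r, m 1 = 3 * a + r ∧ m 2 = 3 * b + r :=
    ⟨m 1 / 3, m 2 / 3, m 1 % 3, by omega, by omega⟩
  have hm : monomial m (1 : k) = X 0 ^ m 0 * (X 1 ^ 3) ^ a * (X 2 ^ 3) ^ b * (X 1 * X 2) ^ r := by
    rw [monomial_eq, C_1, one_mul, Finsupp.prod_fintype _ _ (by simp), Fin.prod_univ_three,
      hr1, hr2]
    ring
  rw [hm]
  aesop (add safe Algebra.subset_adjoin)

theorem equalizer_substAlg_diagonal_cubeRoots_le {ω : ℂ} (hω : IsPrimitiveRoot ω 3) :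
    AlgHom.equalizer (substAlg (diagonal ![1, ω, ω ^ 2])) (AlgHom.id ℂ (MvPolynomial (Fin 3) ℂ)) ≤
      Algebra.adjoin ℂ {X 0, X 1 * X 2, X 1 ^ 3, X 2 ^ 3} := by
  intro p (hp : substAlg _ p = p)
  refine mem_of_forall_monomial_one_mem fun m hm => monomial_one_mem_adjoin ?_
  rw [← hω.pow_eq_one_iff_dvd, pow_add, pow_mul', ← prod_pow_eq_one_of_mem_support hp hm]
  simp [Fin.prod_univ_three, ← pow_mul, mul_comm]

theorem tauQ_mul_sigmaQ_pow_three : (tauQ * sigmaQ) ^ 3 = 1 := by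
  ext i j
  fin_cases i <;> fin_cases j <;>
    simp [tauQ, sigmaQ, pow_succ, Matrix.mul_apply, Fin.sum_univ_three, cons_val] <;>
    norm_num

def tauSigma : (Matrix (Fin 3) (Fin 3) ℚ)ˣ :=
  Units.ofPowEqOne _ 3 tauQ_mul_sigmaQ_pow_three (by norm_num)

theorem grpK_eq_zpowers : grpK = Subgroup.zpowers tauSigma := by
  rw [grpK, Subgroup.zpowers_eq_closure]
  congr 1
  ext u
  simp [Units.ext_iff, tauSigma]

theorem orderOf_tauSigma : orderOf tauSigma = 3 := by
  refine orderOf_eq_prime (Units.pow_ofPowEqOne _ _) fun h => ?_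
  have := congrArg (fun u : (Matrix (Fin 3) (Fin 3) ℚ)ˣ => (u : Matrix (Fin 3) (Fin 3) ℚ) 0 0) h
  norm_num [tauSigma, tauQ, sigmaQ, Matrix.mul_apply, Fin.sum_univ_three] at this

noncomputable def tauSigmaC : Matrix (Fin 3) (Fin 3) ℂ :=
  !![1/2, 1/2, 1; -1/2, -1/2, 1; 1/2, -1/2, 0]

theorem map_tauQ_mul_sigmaQ : (tauQ * sigmaQ).map (Rat.castHom ℂ) = tauSigmaC := by
  ext i j
  fin_cases i <;> fin_cases j <;>
    norm_num [tauQ, sigmaQ, tauSigmaC, Matrix.mul_apply, Fin.sum_univ_three]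

theorem adjoin_le_equalizer_substAlg_tauSigmaC :
    Algebra.adjoin ℂ {f1, f2, f3, hPoly} ≤
      AlgHom.equalizer (substAlg tauSigmaC) (AlgHom.id ℂ (MvPolynomial (Fin 3) ℂ)) := by
  refine Algebra.adjoin_le ?_
  rintro _ (rfl | rfl | rfl | rfl) <;> refine MvPolynomial.funext fun x => ?_ <;>
    simp [eval_substAlg, tauSigmaC, f1, f2, f3, hPoly, dotProduct, Fin.sum_univ_three] <;>
    ring

section CubeRoot

variable {ω : ℂ}

noncomputable def eigenvectorMat (ω : ℂ) : Matrix (Fin 3) (Fin 3) ℂ :=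
  !![2/3, 1/6, 1/6; 0, (2*ω+1)/6, -(2*ω+1)/6; 1/3, -1/6, -1/6]

noncomputable def eigenvectorMatInv (ω : ℂ) : Matrix (Fin 3) (Fin 3) ℂ :=
  !![1, 0, 1; 1, -(2*ω+1), -2; 1, 2*ω+1, -2]

theorem eigenvectorMat_mul_eigenvectorMatInv (hω : ω ^ 2 + ω + 1 = 0) :
    eigenvectorMat ω * eigenvectorMatInv ω = 1 := by
  ext i j
  fin_cases i <;> fin_cases j <;>
    simp [eigenvectorMat, eigenvectorMatInv, Matrix.mul_apply, Fin.sum_univ_three] <;>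
    grind

theorem tauSigmaC_mul_eigenvectorMat (hω : ω ^ 2 + ω + 1 = 0) :
    tauSigmaC * eigenvectorMat ω = eigenvectorMat ω * diagonal ![1, ω, ω ^ 2] := by
  ext i j
  fin_cases i <;> fin_cases j <;>
    simp [eigenvectorMat, tauSigmaC, Matrix.mul_apply, Fin.sum_univ_three] <;>
    grind

theorem substAlg_eigenvectorMatInv_X_zero : substAlg (eigenvectorMatInv ω) (X 0) = f1 :=
  MvPolynomial.funext fun x => by
    simp [eval_substAlg, eigenvectorMatInv, f1, dotProduct, Fin.sum_univ_three]

theorem substAlg_eigenvectorMatInv_X_one_mul_X_two (hω : ω ^ 2 + ω + 1 = 0) :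
    substAlg (eigenvectorMatInv ω) (X 1 * X 2) = 3 * f2 - 2 * f1 ^ 2 :=
  MvPolynomial.funext fun x => by
    simp [eval_substAlg, eigenvectorMatInv, f1, f2, dotProduct, Fin.sum_univ_three]
    grind

theorem substAlg_eigenvectorMatInv_X_one_pow_three (hω : ω ^ 2 + ω + 1 = 0) :
    substAlg (eigenvectorMatInv ω) (X 1 ^ 3) =
      f1 ^ 3 - 9 * f1 * f2 + 9 * f3 - (3 * (2 * ω + 1)) • hPoly :=
  MvPolynomial.funext fun x => by
    simp [eval_substAlg, eigenvectorMatInv, f1, f2, f3, hPoly, dotProduct, Fin.sum_univ_three]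
    grind

theorem substAlg_eigenvectorMatInv_X_two_pow_three (hω : ω ^ 2 + ω + 1 = 0) :
    substAlg (eigenvectorMatInv ω) (X 2 ^ 3) =
      f1 ^ 3 - 9 * f1 * f2 + 9 * f3 + (3 * (2 * ω + 1)) • hPoly :=
  MvPolynomial.funext fun x => by
    simp [eval_substAlg, eigenvectorMatInv, f1, f2, f3, hPoly, dotProduct, Fin.sum_univ_three]
    grind

theorem substAlg_eigenvectorMatInv_mem_adjoin (hω : ω ^ 2 + ω + 1 = 0)
    {y : MvPolynomial (Fin 3) ℂ}
    (hy : y ∈ ({X 0, X 1 * X 2, X 1 ^ 3, X 2 ^ 3} : Set (MvPolynomial (Fin 3) ℂ))) :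
    substAlg (eigenvectorMatInv ω) y ∈ Algebra.adjoin ℂ {f1, f2, f3, hPoly} := by
  rcases hy with rfl | rfl | rfl | rfl <;>
    simp only [substAlg_eigenvectorMatInv_X_zero, substAlg_eigenvectorMatInv_X_one_mul_X_two hω,
      substAlg_eigenvectorMatInv_X_one_pow_three hω,
      substAlg_eigenvectorMatInv_X_two_pow_three hω] <;>
    aesop (add safe Algebra.subset_adjoin)

end CubeRoot

theorem equalizer_substAlg_tauSigmaC_le :
    AlgHom.equalizer (substAlg tauSigmaC) (AlgHom.id ℂ (MvPolynomial (Fin 3) ℂ)) ≤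
      Algebra.adjoin ℂ {f1, f2, f3, hPoly} := by
  obtain ⟨ω, hω⟩ : ∃ ω : ℂ, IsPrimitiveRoot ω 3 :=
    ⟨_, Complex.isPrimitiveRoot_exp 3 (by norm_num)⟩
  have hω' : ω ^ 2 + ω + 1 = 0 := by
    have h := hω.geom_sum_eq_zero (by norm_num)
    simp only [Finset.sum_range_succ, Finset.sum_range_zero] at h
    linear_combination h
  calc _ ≤ _ := equalizer_substAlg_le_map (eigenvectorMat_mul_eigenvectorMatInv hω')
          (tauSigmaC_mul_eigenvectorMat hω')
    _ ≤ (Algebra.adjoin ℂ {X 0, X 1 * X 2, X 1 ^ 3, X 2 ^ 3}).map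
          (substAlg (eigenvectorMatInv ω)) :=
      Subalgebra.map_mono (equalizer_substAlg_diagonal_cubeRoots_le hω)
    _ = Algebra.adjoin ℂ (substAlg (eigenvectorMatInv ω) '' {X 0, X 1 * X 2, X 1 ^ 3, X 2 ^ 3}) :=
      AlgHom.map_adjoin _ _
    _ ≤ _ := Algebra.adjoin_le <| Set.image_subset_iff.2 fun _ hy =>
      substAlg_eigenvectorMatInv_mem_adjoin hω' hy

/-- `K = ⟨τ·σ⟩` has order `3`, and the invariant ring `ℂ[x_0,x_1,x_2]^K` equals the
`ℂ`-subalgebra generated by `f_1, f_2, f_3, h`. -/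
theorem card_K_and_invariants_K_eq_adjoin :
    Nat.card grpK = 3 ∧
    (⨅ u ∈ grpK,
      AlgHom.equalizer
        (substAlg (((u : (Matrix (Fin 3) (Fin 3) ℚ)ˣ) : Matrix (Fin 3) (Fin 3) ℚ).map
          fun a : ℚ => (a : ℂ)))
        (AlgHom.id ℂ (MvPolynomial (Fin 3) ℂ))) =
      Algebra.adjoin ℂ {f1, f2, f3, hPoly} := by
  refine ⟨by rw [grpK_eq_zpowers, Nat.card_zpowers, orderOf_tauSigma], ?_⟩
  rw [grpK_eq_zpowers, Subgroup.zpowers_eq_closure]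
  refine (iInf_equalizer_substAlg_closure (Rat.castHom ℂ) _).trans ?_
  rw [iInf_singleton, tauSigma, Units.val_ofPowEqOne, map_tauQ_mul_sigmaQ]
  exact le_antisymm equalizer_substAlg_tauSigmaC_le adjoin_le_equalizer_substAlg_tauSigmaC
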